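/- arXiv:2010.13318 — 5 statements merged into one kernel-verified Lean document; each statement's English description precedes it below -/
import Mathlib

section
/- For z ∈ ρ(A₀), the range of the γ-field γ(z) = (I − zA₀⁻¹)⁻¹Π equals the kernel of A − zI, where A is the null extension A(A₀⁻¹f + Πφ) = f of the Ryzhov triple. -/
/- STATEMENT 4: For `z ∈ ρ(A₀)`, the range of the γ-field
`γ(z) = (I − zA₀⁻¹)⁻¹ Π` equals `ker(A − z)`, where `A` is the null extension
`A(A₀⁻¹ f + Π φ) = f`.  In the encoding `J = A₀⁻¹`, a vector `u` lies in
`ker(A − z)` iff it admits a decomposition `u = A₀⁻¹(z u) + Π φ` for some `φ ∈ E`. -/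
theorem stmt4 {H E : Type*}
    [NormedAddCommGroup H] [InnerProductSpace ℂ H] [CompleteSpace H]
    [NormedAddCommGroup E] [InnerProductSpace ℂ E] [CompleteSpace E]
    (J : H →L[ℂ] H) (Lft : E →L[ℂ] H)
    (hJsa : IsSelfAdjoint J) (hJinj : Function.Injective J)
    (hLinj : Function.Injective Lft)
    (hdisj : ∀ x : H, x ∈ Set.range J → x ∈ Set.range Lft → x = 0)
    (z : ℂ) (Qinv : H →L[ℂ] H)
    (hQ1 : (1 - z • J).comp Qinv = 1) (hQ2 : Qinv.comp (1 - z • J) = 1) :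
    Set.range (fun φ : E => Qinv (Lft φ)) = {u : H | ∃ φ : E, u = J (z • u) + Lft φ} := by
  ext u
  constructor
  · rintro ⟨φ, rfl⟩
    refine ⟨φ, ?_⟩
    have h := congrArg (fun T : H →L[ℂ] H => T (Lft φ)) hQ1
    simp only [ContinuousLinearMap.comp_apply, ContinuousLinearMap.one_apply,
      ContinuousLinearMap.sub_apply, ContinuousLinearMap.smul_apply] at h
    have : Qinv (Lft φ) - z • J (Qinv (Lft φ)) = Lft φ := h
    rw [map_smul, eq_comm, ← this]
    abel
  · rintro ⟨φ, hu⟩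
    refine ⟨φ, ?_⟩
    have h := congrArg (fun T : H →L[ℂ] H => T u) hQ2
    simp only [ContinuousLinearMap.comp_apply, ContinuousLinearMap.one_apply,
      ContinuousLinearMap.sub_apply, ContinuousLinearMap.smul_apply] at h
    have hu' : u - z • J u = Lft φ := by
      rw [map_smul] at hu
      linear_combination (norm := abel) hu
    show Qinv (Lft φ) = u
    rw [← hu']
    exact h
end

section
/- Let Λ be a self-adjoint operator in E and define Γ₁ on dom(A₀) ∔ Π dom(Λ) by Γ₁(A₀⁻¹f + Πφ) = Π*f + Λφ. Then the abstract Green identity ⟨Au, v⟩_H − ⟨u, Av⟩_H = ⟨Γ₁u, Γ₀v⟩_E − ⟨Γ₀u, Γ₁v⟩_E holds for all u, v ∈ dom(Γ₁). -/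
local notation "⟪" x ", " y "⟫" => @inner ℂ _ _ x y

/- STATEMENT 5: Green's identity.  Ryzhov triple `J = A₀⁻¹` self-adjoint bounded,
`Lft = Π` bounded; `Λ` self-adjoint (symmetric on its domain `domΛ`) in `E`.
For `u = A₀⁻¹ f + Π φ`, `v = A₀⁻¹ g + Π ψ` with `φ, ψ ∈ dom Λ`:
`Au = f`, `Γ₀u = φ`, `Γ₁u = Π* f + Λ φ`, and
`⟨Au, v⟩_H − ⟨u, Av⟩_H = ⟨Γ₁u, Γ₀v⟩_E − ⟨Γ₀u, Γ₁v⟩_E`. -/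
theorem stmt5 {H E : Type*}
    [NormedAddCommGroup H] [InnerProductSpace ℂ H] [CompleteSpace H]
    [NormedAddCommGroup E] [InnerProductSpace ℂ E] [CompleteSpace E]
    (J : H →L[ℂ] H) (Lft : E →L[ℂ] H)
    (hJsa : IsSelfAdjoint J) (hJinj : Function.Injective J)
    (hLinj : Function.Injective Lft)
    (hdisj : ∀ x : H, x ∈ Set.range J → x ∈ Set.range Lft → x = 0)
    (domΛ : Submodule ℂ E) (Λ : E →ₗ[ℂ] E)
    (hΛsym : ∀ φ ∈ domΛ, ∀ ψ ∈ domΛ, ⟪Λ φ, ψ⟫ = ⟪φ, Λ ψ⟫)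
    (f g : H) (φ ψ : E) (hφ : φ ∈ domΛ) (hψ : ψ ∈ domΛ) :
    ⟪f, J g + Lft ψ⟫ - ⟪J f + Lft φ, g⟫
      = ⟪ContinuousLinearMap.adjoint Lft f + Λ φ, ψ⟫
        - ⟪φ, ContinuousLinearMap.adjoint Lft g + Λ ψ⟫ := by
  have hJ : ⟪f, J g⟫ = ⟪J f, g⟫ := by
    rw [← ContinuousLinearMap.adjoint_inner_left, hJsa.adjoint_eq]
  rw [inner_add_right, inner_add_left, inner_add_left, inner_add_right,
    ContinuousLinearMap.adjoint_inner_left, ContinuousLinearMap.adjoint_inner_right,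
    hJ, hΛsym φ hφ ψ hψ]
  ring
end

section
/- For z in the open upper half-plane, the imaginary part of the M-operator is nonnegative: Im⟨M(z)φ, φ⟩ ≥ 0 for all φ ∈ dom(Λ). More precisely, Im⟨M(z)φ, φ⟩ = (Im z)‖(I − zA₀⁻¹)⁻¹Πφ‖². -/
local notation "⟪" x ", " y "⟫" => @inner ℂ _ _ x y

/- STATEMENT 8: For `Im z > 0` (so `z ∈ ρ(A₀)` automatically), the M-operator
`M(z) = Λ + zΠ*(I − zA₀⁻¹)⁻¹Π` has nonnegative imaginary part on `dom Λ`: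
`Im⟨M(z)φ, φ⟩ ≥ 0`, and more precisely
`Im⟨M(z)φ, φ⟩ = (Im z)‖(I − zA₀⁻¹)⁻¹Πφ‖²`.
(The inner product `⟨M(z)φ, φ⟩`, linear in the `M(z)φ` slot, is rendered as
`⟪φ, M(z)φ⟫` in Mathlib's convention, which is linear in the second argument.) -/
theorem stmt8 {H E : Type*}
    [NormedAddCommGroup H] [InnerProductSpace ℂ H] [CompleteSpace H]
    [NormedAddCommGroup E] [InnerProductSpace ℂ E] [CompleteSpace E]
    (J : H →L[ℂ] H) (Lft : E →L[ℂ] H)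
    (hJsa : IsSelfAdjoint J) (hJinj : Function.Injective J)
    (hLinj : Function.Injective Lft)
    (domΛ : Submodule ℂ E) (Λ : E →ₗ[ℂ] E)
    (hΛsym : ∀ φ ∈ domΛ, ∀ ψ ∈ domΛ, ⟪Λ φ, ψ⟫ = ⟪φ, Λ ψ⟫)
    (z : ℂ) (hz : 0 < z.im)
    (Qzinv : H →L[ℂ] H)
    (hz1 : (1 - z • J).comp Qzinv = 1) (hz2 : Qzinv.comp (1 - z • J) = 1) :
    ∀ φ ∈ domΛ,
      0 ≤ (⟪φ, Λ φ + z • ContinuousLinearMap.adjoint Lft (Qzinv (Lft φ))⟫).im ∧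
      (⟪φ, Λ φ + z • ContinuousLinearMap.adjoint Lft (Qzinv (Lft φ))⟫).im
        = z.im * ‖Qzinv (Lft φ)‖ ^ 2 := by
  intro φ hφ
  set v := Qzinv (Lft φ) with hv
  have hΛreal : (⟪φ, Λ φ⟫).im = 0 := by
    have h := hΛsym φ hφ φ hφ
    have h2 : (starRingEnd ℂ) ⟪φ, Λ φ⟫ = ⟪φ, Λ φ⟫ := by
      rw [inner_conj_symm]; exact h
    exact Complex.conj_eq_iff_im.mp h2
  have hJreal : (⟪J v, v⟫).im = 0 := by
    have h2 : (starRingEnd ℂ) ⟪J v, v⟫ = ⟪J v, v⟫ := by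
      rw [inner_conj_symm, ← ContinuousLinearMap.adjoint_inner_left, hJsa.adjoint_eq]
    exact Complex.conj_eq_iff_im.mp h2
  have hu : v - z • J v = Lft φ := by
    have h := congrArg (fun T : H →L[ℂ] H => T (Lft φ)) hz1
    simpa [ContinuousLinearMap.comp_apply, ContinuousLinearMap.sub_apply,
      ContinuousLinearMap.smul_apply] using h
  have hinner : ⟪Lft φ, v⟫
      = ((‖v‖ : ℂ)^2) - (starRingEnd ℂ z) * ⟪J v, v⟫ := by
    rw [← hu, inner_sub_left, inner_smul_left, inner_self_eq_norm_sq_to_K,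
      sub_eq_neg_add]
    abel
  have hmain : ⟪φ, Λ φ + z • ContinuousLinearMap.adjoint Lft v⟫
      = ⟪φ, Λ φ⟫ + z * (((‖v‖ : ℂ)^2) - (starRingEnd ℂ z) * ⟪J v, v⟫) := by
    rw [inner_add_right, inner_smul_right, ContinuousLinearMap.adjoint_inner_right, hinner]
  have him : (⟪φ, Λ φ + z • ContinuousLinearMap.adjoint Lft v⟫).im
      = z.im * ‖v‖ ^ 2 := by
    rw [hmain]
    simp [Complex.add_im, Complex.mul_im, Complex.sub_im, Complex.sub_re,
      Complex.mul_re, ← Complex.ofReal_pow, Complex.ofReal_im, Complex.ofReal_re,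
      hΛreal, hJreal, Complex.conj_re, Complex.conj_im]
    ring
  exact ⟨him ▸ by positivity, him⟩
end

section
/- Kreĭn-type resolvent formula consistency: under the Ryzhov triple setup, for z ∈ ρ(A₀) such that the closure of α + βM(z) is boundedly invertible, the operator R(z) = (A₀ − zI)⁻¹ − (I − zA₀⁻¹)⁻¹Π[cl(α + βM(z))]⁻¹βΠ*(I − zA₀⁻¹)⁻¹ satisfies the resolvent identity R(z) − R(w) = (z − w)R(z)R(w) for all such z, w, where α, β are as in the generalized boundary condition and β is bounded. -/
/-
With `J = A₀⁻¹` and `Q(z) = (1 - zJ)⁻¹` everything is algebra in the ring of bounded operators: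
`(A₀ - z)⁻¹ = J Q(z)`, `Q(z) - Q(w) = (z - w) J Q(z) Q(w)`, `γ(z̄)* = Π* Q(z)` since `J` is
self-adjoint, and `M(w) - M(z) = (w - z) Π* Q(z) Q(w) Π` yields the second resolvent identity
`M(z)⁻¹ - M(w)⁻¹ = (w - z) M(z)⁻¹ Π* Q(z) Q(w) Π M(w)⁻¹`. Expanding `(z - w) R(z) R(w)` with these
identities, the cross terms cancel pairwise and `R(z) - R(w)` remains.
-/

section OneSubSMulInverse

variable {𝕜 A : Type*} [CommRing 𝕜] [Ring A] [Algebra 𝕜 A] {j q q' : A} {z w : 𝕜}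

theorem commute_of_one_sub_smul_mul_eq_one (h₁ : (1 - z • j) * q = 1)
    (h₂ : q * (1 - z • j) = 1) : Commute j q := by
  have hj : Commute j (1 - z • j) := (Commute.one_right j).sub_right ((Commute.refl j).smul_right z)
  calc j * q = q * (1 - z • j) * j * q := by rw [h₂, one_mul]
    _ = q * j * ((1 - z • j) * q) := by rw [mul_assoc q, ← hj.eq]; noncomm_ring
    _ = q * j := by rw [h₁, mul_one]

theorem sub_eq_smul_mul_of_one_sub_smul (hq : q * (1 - z • j) = 1)
    (hq' : (1 - w • j) * q' = 1) : q - q' = (z - w) • (q * j * q') := by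
  calc q - q' = q * (1 - w • j) * q' - q * (1 - z • j) * q' := by
        rw [hq, one_mul, mul_assoc, hq', mul_one]
    _ = (z - w) • (q * j * q') := by
        simp only [mul_sub, sub_mul, mul_one, mul_smul_comm, smul_mul_assoc, sub_smul]; abel

theorem smul_sub_smul_eq_smul_mul_of_one_sub_smul (hq : q * (1 - z • j) = 1)
    (hq' : (1 - w • j) * q' = 1) : z • q - w • q' = (z - w) • (q * q') := by
  have hq_eq : q = 1 + z • (q * j) := by
    rwa [mul_sub, mul_one, mul_smul_comm, sub_eq_iff_eq_add] at hq
  calc z • q - w • q' = z • (q - q') + (z - w) • q' := by module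
    _ = (z - w) • ((1 + z • (q * j)) * q') := by
        rw [sub_eq_smul_mul_of_one_sub_smul hq hq']
        simp only [add_mul, one_mul, smul_mul_assoc]; module
    _ = (z - w) • (q * q') := by rw [← hq_eq]

theorem star_eq_of_one_sub_smul_mul_eq_one [StarRing 𝕜] [StarRing A] [StarModule 𝕜 A]
    (hj : IsSelfAdjoint j) (hq' : (1 - starRingEnd 𝕜 z • j) * q' = 1)
    (hq : (1 - z • j) * q = 1) : star q' = q := by
  refine left_inv_eq_right_inv ?_ hq
  have h := congrArg star hq'
  rwa [star_mul, star_sub, star_one, star_smul, hj.star_eq, starRingEnd_apply, star_star] at h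

end OneSubSMulInverse

theorem sub_eq_apply_sub_of_leftInvOn_of_rightInverse {E F : Type*} [AddCommGroup E]
    [FunLike F E E] [AddMonoidHomClass F E E] {D : Set E} {Mz Mw Nw : E → E} {Nz : F}
    (hNz : Set.LeftInvOn Nz Mz D) (hNw : Function.RightInverse Nw Mw) (hNwD : ∀ ψ, Nw ψ ∈ D)
    (ψ : E) : Nz ψ - Nw ψ = Nz (Mw (Nw ψ) - Mz (Nw ψ)) := by
  rw [map_sub, hNw ψ, hNz (hNwD ψ)]

section Operators

variable {𝕜 H E : Type*} [NontriviallyNormedField 𝕜] [NormedAddCommGroup H] [NormedSpace 𝕜 H]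
  [NormedAddCommGroup E] [NormedSpace 𝕜 E] {J Q Q' : H →L[𝕜] H} {z w : 𝕜}

theorem eq_mul_of_map_sub_smul {R : H →L[𝕜] H} (hR : ∀ f, R (f - z • J f) = J f)
    (hQ : (1 - z • J) * Q = 1) : R = J * Q := by
  have h : R * (1 - z • J) = J := by ext f; simpa using hR f
  rw [← h, mul_assoc, hQ, mul_one]

theorem apply_sub_apply_eq_of_one_sub_smul (hQ₁ : (1 - z • J) * Q = 1)
    (hQ₂ : Q * (1 - z • J) = 1) (hQ' : (1 - w • J) * Q' = 1) (x : H) :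
    Q x - Q' x = (z - w) • J (Q (Q' x)) := by
  have h := sub_eq_smul_mul_of_one_sub_smul hQ₂ hQ'
  rw [← (commute_of_one_sub_smul_mul_eq_one hQ₁ hQ₂).eq] at h
  simpa using DFunLike.congr_fun h x

/-- `Nz`, `Nw` invert the Weyl functions `M(z) = Λ + z Γ Q P` and `M(w) = Λ + w Γ Q' P`. -/
theorem sub_eq_smul_of_inverse_weyl {D : Submodule 𝕜 E} {Λ : E →ₗ[𝕜] E} {Γ : H →L[𝕜] E}
    {P : E →L[𝕜] H} {Nz Nw : E →L[𝕜] E} (hQ : Q * (1 - z • J) = 1)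
    (hQ' : (1 - w • J) * Q' = 1) (hNz : ∀ φ ∈ D, Nz (Λ φ + z • Γ (Q (P φ))) = φ)
    (hNw : ∀ φ, Λ (Nw φ) + w • Γ (Q' (P (Nw φ))) = φ) (hNwD : ∀ φ, Nw φ ∈ D) (ψ : E) :
    Nz ψ - Nw ψ = (w - z) • Nz (Γ (Q (Q' (P (Nw ψ))))) := by
  rw [sub_eq_apply_sub_of_leftInvOn_of_rightInverse (Mz := fun φ => Λ φ + z • Γ (Q (P φ)))
    (Mw := fun φ => Λ φ + w • Γ (Q' (P φ))) hNz hNw hNwD ψ]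
  have h := congrArg Γ (DFunLike.congr_fun (smul_sub_smul_eq_smul_mul_of_one_sub_smul hQ hQ')
    (P (Nw ψ)))
  simp only [sub_apply, smul_apply, mul_apply_eq_comp, map_sub, map_smul] at h
  have hM : w • Γ (Q' (P (Nw ψ))) - z • Γ (Q (P (Nw ψ))) = (w - z) • Γ (Q (Q' (P (Nw ψ)))) := by
    linear_combination (norm := module) -h
  simp only [add_sub_add_left_eq_sub, hM, map_smul]

end Operators

theorem adjoint_comp_eq_of_one_sub_smul {𝕜 H E : Type*} [RCLike 𝕜] [NormedAddCommGroup H]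
    [InnerProductSpace 𝕜 H] [CompleteSpace H] [NormedAddCommGroup E] [InnerProductSpace 𝕜 E]
    [CompleteSpace E] {J Q Q' : H →L[𝕜] H} {P : E →L[𝕜] H} {z : 𝕜} (hJ : IsSelfAdjoint J)
    (hQ' : (1 - starRingEnd 𝕜 z • J) * Q' = 1) (hQ : (1 - z • J) * Q = 1) :
    ContinuousLinearMap.adjoint (Q'.comp P) = (ContinuousLinearMap.adjoint P).comp Q := by
  rw [ContinuousLinearMap.adjoint_comp, ← ContinuousLinearMap.star_eq_adjoint,
    star_eq_of_one_sub_smul_mul_eq_one hJ hQ' hQ]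

theorem stmt14_general {H E : Type*}
    [NormedAddCommGroup H] [InnerProductSpace ℂ H] [CompleteSpace H]
    [NormedAddCommGroup E] [InnerProductSpace ℂ E] [CompleteSpace E]
    (J : H →L[ℂ] H) (Lft : E →L[ℂ] H)
    (hJsa : IsSelfAdjoint J)
    (domΛ : Submodule ℂ E) (Λ : E →ₗ[ℂ] E)
    (z w : ℂ)
    (Rz Rw : H →L[ℂ] H)
    (hRz2 : ∀ f : H, Rz (f - z • J f) = J f)
    (hRw2 : ∀ f : H, Rw (f - w • J f) = J f)
    (Qzinv Qzbarinv Qwinv Qwbarinv : H →L[ℂ] H)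
    (hz1 : (1 - z • J).comp Qzinv = 1) (hz2 : Qzinv.comp (1 - z • J) = 1)
    (hzb1 : (1 - (starRingEnd ℂ z) • J).comp Qzbarinv = 1)
    (hw1 : (1 - w • J).comp Qwinv = 1)
    (hwb1 : (1 - (starRingEnd ℂ w) • J).comp Qwbarinv = 1)
    (Nz Nw : E →L[ℂ] E)
    -- Nz is a two-sided inverse of M(z) = Λ + zΠ*(1 − zJ)⁻¹Π (defined on dom Λ):
    (hNz2 : ∀ φ ∈ domΛ,
      Nz (Λ φ + z • ContinuousLinearMap.adjoint Lft (Qzinv (Lft φ))) = φ)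
    (hNwdom : ∀ φ : E, Nw φ ∈ domΛ)
    (hNw1 : ∀ φ : E,
      Λ (Nw φ) + w • ContinuousLinearMap.adjoint Lft (Qwinv (Lft (Nw φ))) = φ) :
    (Rz - (Qzinv.comp Lft).comp
        (Nz.comp (ContinuousLinearMap.adjoint (Qzbarinv.comp Lft))))
      - (Rw - (Qwinv.comp Lft).comp
        (Nw.comp (ContinuousLinearMap.adjoint (Qwbarinv.comp Lft))))
    = (z - w) •
      ((Rz - (Qzinv.comp Lft).comp
          (Nz.comp (ContinuousLinearMap.adjoint (Qzbarinv.comp Lft)))).comp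
        (Rw - (Qwinv.comp Lft).comp
          (Nw.comp (ContinuousLinearMap.adjoint (Qwbarinv.comp Lft)))))  := by
  set L := ContinuousLinearMap.adjoint Lft
  have hQJ : ∀ y, Qzinv (J y) = J (Qzinv y) := fun y =>
    (DFunLike.congr_fun (commute_of_one_sub_smul_mul_eq_one hz1 hz2).eq y).symm
  have hQ_sub := apply_sub_apply_eq_of_one_sub_smul hz1 hz2 hw1
  have hN_sub := sub_eq_smul_of_inverse_weyl hz2 hw1 hNz2 hNw1 hNwdom
  rw [adjoint_comp_eq_of_one_sub_smul hJsa hzb1 hz1, adjoint_comp_eq_of_one_sub_smul hJsa hwb1 hw1,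
    eq_mul_of_map_sub_smul hRz2 hz1, eq_mul_of_map_sub_smul hRw2 hw1]
  ext x
  simp only [sub_apply, ContinuousLinearMap.comp_apply, smul_apply, mul_apply_eq_comp, map_sub, hQJ]
  have h₁ := congrArg J (hQ_sub x)
  have h₂ := congrArg (fun v => Qzinv (Lft (Nz (L v)))) (hQ_sub x)
  have h₃ := congrArg (fun v => Qzinv (Lft v)) (hN_sub (L (Qwinv x)))
  simp only [map_sub, map_smul] at h₁ h₂ h₃
  linear_combination (norm := module) h₁ - hQ_sub (Lft (Nw (L (Qwinv x)))) - h₂ - h₃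

theorem stmt14 {H E : Type*}
    [NormedAddCommGroup H] [InnerProductSpace ℂ H] [CompleteSpace H]
    [NormedAddCommGroup E] [InnerProductSpace ℂ E] [CompleteSpace E]
    (J : H →L[ℂ] H) (Lft : E →L[ℂ] H)
    (hJsa : IsSelfAdjoint J) (hJinj : Function.Injective J)
    (hLinj : Function.Injective Lft)
    (hdisj : ∀ x : H, x ∈ Set.range J → x ∈ Set.range Lft → x = 0)
    (domΛ : Submodule ℂ E) (Λ : E →ₗ[ℂ] E)
    (hΛsym : ∀ φ ∈ domΛ, ∀ ψ ∈ domΛ,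
        (inner ℂ (Λ φ) ψ : ℂ) = inner ℂ φ (Λ ψ))
    (z w : ℂ)
    (Rz Rw : H →L[ℂ] H)
    (hRz : ∀ y : H, Rz y = J y + z • J (Rz y))
    (hRz2 : ∀ f : H, Rz (f - z • J f) = J f)
    (hRw : ∀ y : H, Rw y = J y + w • J (Rw y))
    (hRw2 : ∀ f : H, Rw (f - w • J f) = J f)
    (Qzinv Qzbarinv Qwinv Qwbarinv : H →L[ℂ] H)
    (hz1 : (1 - z • J).comp Qzinv = 1) (hz2 : Qzinv.comp (1 - z • J) = 1)
    (hzb1 : (1 - (starRingEnd ℂ z) • J).comp Qzbarinv = 1)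
    (hzb2 : Qzbarinv.comp (1 - (starRingEnd ℂ z) • J) = 1)
    (hw1 : (1 - w • J).comp Qwinv = 1) (hw2 : Qwinv.comp (1 - w • J) = 1)
    (hwb1 : (1 - (starRingEnd ℂ w) • J).comp Qwbarinv = 1)
    (hwb2 : Qwbarinv.comp (1 - (starRingEnd ℂ w) • J) = 1)
    (Nz Nw : E →L[ℂ] E)
    -- Nz is a two-sided inverse of M(z) = Λ + zΠ*(1 − zJ)⁻¹Π (defined on dom Λ):
    (hNzdom : ∀ φ : E, Nz φ ∈ domΛ)
    (hNz1 : ∀ φ : E,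
      Λ (Nz φ) + z • ContinuousLinearMap.adjoint Lft (Qzinv (Lft (Nz φ))) = φ)
    (hNz2 : ∀ φ ∈ domΛ,
      Nz (Λ φ + z • ContinuousLinearMap.adjoint Lft (Qzinv (Lft φ))) = φ)
    (hNwdom : ∀ φ : E, Nw φ ∈ domΛ)
    (hNw1 : ∀ φ : E,
      Λ (Nw φ) + w • ContinuousLinearMap.adjoint Lft (Qwinv (Lft (Nw φ))) = φ)
    (hNw2 : ∀ φ ∈ domΛ,
      Nw (Λ φ + w • ContinuousLinearMap.adjoint Lft (Qwinv (Lft φ))) = φ) :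
    (Rz - (Qzinv.comp Lft).comp
        (Nz.comp (ContinuousLinearMap.adjoint (Qzbarinv.comp Lft))))
      - (Rw - (Qwinv.comp Lft).comp
        (Nw.comp (ContinuousLinearMap.adjoint (Qwbarinv.comp Lft))))
    = (z - w) •
      ((Rz - (Qzinv.comp Lft).comp
          (Nz.comp (ContinuousLinearMap.adjoint (Qzbarinv.comp Lft)))).comp
        (Rw - (Qwinv.comp Lft).comp
          (Nw.comp (ContinuousLinearMap.adjoint (Qwbarinv.comp Lft))))) :=
  stmt14_general J Lft hJsa domΛ Λ z w Rz Rw hRz2 hRw2 Qzinv Qzbarinv Qwinv Qwbarinv hz1 hz2 hzb1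
    hw1 hwb1 Nz Nw hNz2 hNwdom hNw1
end

section
/- Let (λⱼ, φⱼ), j ∈ ℕ, be the eigenvalues and an orthonormal basis of eigenfunctions of a positive self-adjoint operator A₀⁺ with compact resolvent in L²(Ω₊), and let 𝟙 ∈ L²(Ω₊) be a fixed vector (the constant function 1). Suppose v ∈ dom(A₀⁺) satisfies A₀⁺v = z(v − |Ω|⁻¹⟨v, 𝟙⟩𝟙) with z ∉ {λⱼ} and ⟨v, 𝟙⟩ ≠ 0. Then z ≠ 0 and z satisfies |Ω| + z ∑ⱼ (λⱼ − z)⁻¹ |⟨𝟙, φⱼ⟩|² = 0. -/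
local notation "⟪" x ", " y "⟫" => @inner ℂ _ _ x y

/-!
Coefficientwise, the equation reads `(λⱼ - z) ⟨φⱼ, v⟩ = -(z / |Ω|) ⟨𝟙, v⟩ ⟨φⱼ, 𝟙⟩`. Parseval's
identity then writes `⟨𝟙, v⟩` as `-(z / |Ω|) ⟨𝟙, v⟩ ∑ⱼ (λⱼ - z)⁻¹ |⟨𝟙, φⱼ⟩|²`, and cancelling
`⟨𝟙, v⟩ ≠ 0` gives the secular equation; it forces `z ≠ 0` because `|Ω| ≠ 0`.
-/

open scoped InnerProductSpace

theorem HilbertBasis.inner_eq_mul_tsum_of_coeff_eq {ι 𝕜 H : Type*} [RCLike 𝕜]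
    [NormedAddCommGroup H] [InnerProductSpace 𝕜 H] (b : HilbertBasis ι 𝕜 H) {μ : ι → 𝕜}
    {z a : 𝕜} {u v : H} (hμ : ∀ j, μ j ≠ z)
    (hv : ∀ j, (μ j - z) * ⟪b j, v⟫_𝕜 = a * ⟪b j, u⟫_𝕜) :
    ⟪u, v⟫_𝕜 = a * ∑' j, (μ j - z)⁻¹ * (‖⟪u, b j⟫_𝕜‖ : 𝕜) ^ 2 := by
  rw [← b.tsum_inner_mul_inner u v, ← tsum_mul_left]
  congr 1 with j
  have hcoeff : ⟪b j, v⟫_𝕜 = (μ j - z)⁻¹ * (a * ⟪b j, u⟫_𝕜) := by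
    rw [← hv j, inv_mul_cancel_left₀ (sub_ne_zero.mpr (hμ j))]
  rw [hcoeff, ← RCLike.mul_conj, inner_conj_symm]
  ring

theorem stmt15_general {H : Type*}
    [NormedAddCommGroup H] [InnerProductSpace ℂ H]
    (φb : HilbertBasis ℕ ℂ H) (lam : ℕ → ℝ)
    (one : H) (vol : ℝ) (hvol : 0 < vol)
    (v wv : H)
    (hAv : ∀ j, ⟪φb j, wv⟫ = (lam j : ℂ) * ⟪φb j, v⟫)
    (z : ℂ)
    (heq : wv = z • (v - ((vol : ℂ)⁻¹ * ⟪one, v⟫) • one))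
    (hz : ∀ j, z ≠ (lam j : ℂ))
    (hv1 : ⟪one, v⟫ ≠ 0) :
    z ≠ 0 ∧
      (vol : ℂ) + z * ∑' j, ((lam j : ℂ) - z)⁻¹ * ((‖⟪one, φb j⟫‖ : ℂ)) ^ 2 = 0 := by
  set S := ∑' j, ((lam j : ℂ) - z)⁻¹ * ((‖⟪one, φb j⟫‖ : ℂ)) ^ 2
  have hvolC : (vol : ℂ) ≠ 0 := mod_cast hvol.ne'
  have hcoeff (j : ℕ) :
      ((lam j : ℂ) - z) * ⟪φb j, v⟫ = -(z * (vol : ℂ)⁻¹ * ⟪one, v⟫) * ⟪φb j, one⟫ := by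
    have h := hAv j
    rw [heq, inner_smul_right, inner_sub_right, inner_smul_right] at h
    linear_combination -h
  have hparseval : ⟪one, v⟫ = -(z * (vol : ℂ)⁻¹ * ⟪one, v⟫) * S :=
    φb.inner_eq_mul_tsum_of_coeff_eq (fun j => (hz j).symm) hcoeff
  have hsecular : (vol : ℂ) + z * S = 0 := by
    refine (mul_eq_zero.mp ?_).resolve_left hv1
    linear_combination (vol : ℂ) * hparseval - z * ⟪one, v⟫ * S * mul_inv_cancel₀ hvolC
  refine ⟨fun hz0 => hvolC ?_, hsecular⟩
  simpa [hz0] using hsecular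

theorem stmt15 {H : Type*}
    [NormedAddCommGroup H] [InnerProductSpace ℂ H] [CompleteSpace H]
    (φb : HilbertBasis ℕ ℂ H) (lam : ℕ → ℝ)
    (hpos : ∀ j, 0 < lam j)
    (hcompact : Filter.Tendsto lam Filter.atTop Filter.atTop)
    (one : H) (vol : ℝ) (hvol : 0 < vol)
    (v wv : H)
    (hAv : ∀ j, ⟪φb j, wv⟫ = (lam j : ℂ) * ⟪φb j, v⟫)
    (z : ℂ)
    (heq : wv = z • (v - ((vol : ℂ)⁻¹ * ⟪one, v⟫) • one))
    (hz : ∀ j, z ≠ (lam j : ℂ))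
    (hv1 : ⟪one, v⟫ ≠ 0) :
    z ≠ 0 ∧
      (vol : ℂ) + z * ∑' j, ((lam j : ℂ) - z)⁻¹ * ((‖⟪one, φb j⟫‖ : ℂ)) ^ 2 = 0 :=
  stmt15_general φb lam one vol hvol v wv hAv z heq hz hv1
end
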